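/- arXiv:1909.00256 — 4 statements merged into one kernel-verified Lean document; each statement's English description precedes it below -/
import Mathlib

section
/- Let V be a 4-dimensional real inner product space, let 𝒯 : V × V × V → ℝ be an alternating trilinear form, and let J : V → V be a linear isometry with J ∘ J = −id_V. Then for all X, Y, Z ∈ V one has 𝒯(X,Y,Z) − 𝒯(JX,JY,Z) − 𝒯(JX,Y,JZ) − 𝒯(X,JY,JZ) = 0. -/
/-!
Put `D(X,Y,Z) = 𝒯(X,Y,Z) − 𝒯(JX,JY,Z) − 𝒯(JX,Y,JZ) − 𝒯(X,JY,JZ)`. This is again an alternating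
3-form, and `J² = −1` alone gives `D(x, Jx, y) = 0`. In dimension 4 there is an orthogonal basis
`u, Ju, w, Jw` (take `w ⟂ span {u, Ju}`); any three distinct vectors of it contain a pair
`x, Jx`, so `D` vanishes on the basis and hence everywhere.
-/

open scoped RealInnerProductSpace

open Module

namespace AlternatingMap

variable {R M N : Type*} [CommRing R] [AddCommGroup M] [Module R M] [AddCommGroup N] [Module R N]
  (f : M [⋀^Fin 3]→ₗ[R] N) (a b c : M)

theorem map_three_swap_zero_one : f ![b, a, c] = -f ![a, b, c] := by
  convert f.map_swap ![a, b, c] (i := 0) (j := 1) (by decide) using 2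
  ext k; fin_cases k <;> rfl

theorem map_three_swap_zero_two : f ![c, b, a] = -f ![a, b, c] := by
  convert f.map_swap ![a, b, c] (i := 0) (j := 2) (by decide) using 2
  ext k; fin_cases k <;> rfl

theorem map_three_swap_one_two : f ![a, c, b] = -f ![a, b, c] := by
  convert f.map_swap ![a, b, c] (i := 1) (j := 2) (by decide) using 2
  ext k; fin_cases k <;> rfl

theorem map_three_same_zero_one : f ![a, a, c] = 0 :=
  f.map_eq_zero_of_eq ![a, a, c] (i := 0) (j := 1) rfl (by decide)

theorem map_three_same_zero_two : f ![a, b, a] = 0 :=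
  f.map_eq_zero_of_eq ![a, b, a] (i := 0) (j := 2) rfl (by decide)

theorem map_three_same_one_two : f ![a, b, b] = 0 :=
  f.map_eq_zero_of_eq ![a, b, b] (i := 1) (j := 2) rfl (by decide)

theorem map_three_neg_slot_one : f ![a, -b, c] = -f ![a, b, c] := by
  simpa using (f.curryLeft a).map_vecCons_smul ![c] (-1) b

theorem map_three_apply (g : Fin 3 → M →ₗ[R] M) :
    f (fun i => g i (![a, b, c] i)) = f ![g 0 a, g 1 b, g 2 c] :=
  congrArg f (by ext k; fin_cases k <;> rfl)

def complexDefect (J : M →ₗ[R] M) : M [⋀^Fin 3]→ₗ[R] N where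
  toMultilinearMap := f.toMultilinearMap - f.toMultilinearMap.compLinearMap ![J, J, .id]
      - f.toMultilinearMap.compLinearMap ![J, .id, J] - f.toMultilinearMap.compLinearMap ![.id, J, J]
  map_eq_zero_of_eq' v i j hv hij := by
    wlog hlt : i < j generalizing i j
    · exact this j i hv.symm hij.symm (lt_of_le_of_ne (not_lt.mp hlt) hij.symm)
    obtain ⟨a, b, c, rfl⟩ : ∃ a b c, v = ![a, b, c] :=
      ⟨v 0, v 1, v 2, by ext k; fin_cases k <;> rfl⟩
    change f ![a, b, c] - f _ - f _ - f _ = 0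
    simp only [map_three_apply]
    fin_cases i <;> fin_cases j <;> simp at hv hlt <;> subst hv
    · simp [map_three_same_zero_one, map_three_swap_zero_one f a (J a) (J c)]
    · simp [map_three_same_zero_two, map_three_swap_zero_two f a (J b) (J a)]
    · simp [map_three_same_one_two, map_three_swap_one_two f (J a) b (J b)]

theorem complexDefect_apply (J : M →ₗ[R] M) :
    f.complexDefect J ![a, b, c] =
      f ![a, b, c] - f ![J a, J b, c] - f ![J a, b, J c] - f ![a, J b, J c] := by
  simp [complexDefect, map_three_apply]

theorem complexDefect_apply_map_self {J : M →ₗ[R] M} (hJ : ∀ x, J (J x) = -x) (x y : M) :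
    f.complexDefect J ![x, J x, y] = 0 := by
  rw [complexDefect_apply, hJ, map_three_neg_slot_one, map_three_neg_slot_one,
    map_three_same_zero_one, map_three_same_zero_one, map_three_swap_zero_one]
  abel

theorem eq_zero_of_apply_map_self_eq_zero {J : M →ₗ[R] M} (e : Basis (Fin 4) R M) {u w : M}
    (he : ⇑e = ![u, J u, w, J w]) (hf : ∀ x y, f ![x, J x, y] = 0) : f = 0 := by
  have h₁ : ∀ x y, f ![J x, x, y] = 0 := fun x y => by rw [map_three_swap_zero_one, hf, neg_zero]
  have h₂ : ∀ x y, f ![x, y, J x] = 0 := fun x y => by rw [map_three_swap_one_two, hf, neg_zero]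
  have h₃ : ∀ x y, f ![J x, y, x] = 0 := fun x y => by rw [map_three_swap_zero_two, h₂, neg_zero]
  have h₄ : ∀ x y, f ![y, x, J x] = 0 := fun x y => by rw [map_three_swap_zero_two, h₁, neg_zero]
  have h₅ : ∀ x y, f ![y, J x, x] = 0 := fun x y => by rw [map_three_swap_zero_two, hf, neg_zero]
  refine e.ext_alternating fun v hv => ?_
  have hv' : (fun i => e (v i)) = ![e (v 0), e (v 1), e (v 2)] := by
    ext k; fin_cases k <;> rfl
  have h01 : v 0 ≠ v 1 := hv.ne (by decide)
  have h02 : v 0 ≠ v 2 := hv.ne (by decide)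
  have h12 : v 1 ≠ v 2 := hv.ne (by decide)
  rw [hv', zero_apply, he]
  generalize v 0 = i, v 1 = j, v 2 = k at h01 h02 h12
  fin_cases i <;> fin_cases j <;> fin_cases k <;> simp_all

end AlternatingMap

namespace LinearIsometry

variable {V : Type*} [NormedAddCommGroup V] [InnerProductSpace ℝ V] {J : V →ₗᵢ[ℝ] V}

theorem inner_map_right_eq_neg_of_map_map (hJ : ∀ x, J (J x) = -x) (x y : V) :
    ⟪x, J y⟫ = -⟪J x, y⟫ := by
  rw [← J.inner_map_map, hJ, inner_neg_right]

theorem inner_map_self_eq_zero_of_map_map (hJ : ∀ x, J (J x) = -x) (x : V) : ⟪x, J x⟫ = 0 := by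
  have h := inner_map_right_eq_neg_of_map_map hJ x x
  rw [real_inner_comm x (J x)] at h
  linarith

theorem exists_linearIndependent_pairs_of_finrank_eq_four (hdim : finrank ℝ V = 4)
    (hJ : ∀ x, J (J x) = -x) : ∃ u w : V, LinearIndependent ℝ ![u, J u, w, J w] := by
  have : FiniteDimensional ℝ V := .of_finrank_pos (by omega)
  have : Nontrivial V := nontrivial_of_finrank_pos (R := ℝ) (by omega)
  obtain ⟨u, hu⟩ := exists_ne (0 : V)
  set K := Submodule.span ℝ (Set.range ![u, J u])
  have hK : Kᗮ ≠ ⊥ := by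
    intro h
    have hsum := K.finrank_add_finrank_orthogonal
    rw [h, finrank_bot, hdim] at hsum
    have : finrank ℝ K ≤ 2 := finrank_range_le_card ![u, J u]
    omega
  obtain ⟨w, hwK, hw⟩ := Submodule.exists_mem_ne_zero_of_ne_bot hK
  have huw : ⟪u, w⟫ = 0 :=
    K.inner_right_of_mem_orthogonal (Submodule.subset_span (by simp [Set.range])) hwK
  have hJuw : ⟪J u, w⟫ = 0 :=
    K.inner_right_of_mem_orthogonal (Submodule.subset_span (by simp [Set.range])) hwK
  have huJw : ⟪u, J w⟫ = 0 := by rw [inner_map_right_eq_neg_of_map_map hJ, hJuw, neg_zero]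
  have hJuJw : ⟪J u, J w⟫ = 0 := by rw [J.inner_map_map, huw]
  refine ⟨u, w, linearIndependent_of_ne_zero_of_inner_eq_zero ?_ ?_⟩
  · intro i; fin_cases i <;> simp [hu, hw, map_eq_zero_iff J J.injective]
  · intro i j hij
    fin_cases i <;> fin_cases j <;>
      simp_all [inner_map_self_eq_zero_of_map_map hJ, real_inner_comm]

end LinearIsometry

/-- Let `V` be a 4-dimensional real inner product space, `𝒯` an
alternating trilinear form on `V`, and `J : V → V` a linear isometry with `J ∘ J = -id`.
Then `𝒯(X,Y,Z) − 𝒯(JX,JY,Z) − 𝒯(JX,Y,JZ) − 𝒯(X,JY,JZ) = 0`. -/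
theorem skew_torsion_identity
    (V : Type*) [NormedAddCommGroup V] [InnerProductSpace ℝ V]
    (hdim : Module.finrank ℝ V = 4)
    (𝒯 : V [⋀^Fin 3]→ₗ[ℝ] ℝ)
    (J : V →ₗᵢ[ℝ] V) (hJ : ∀ x : V, J (J x) = -x)
    (X Y Z : V) :
    𝒯 ![X, Y, Z] - 𝒯 ![J X, J Y, Z] - 𝒯 ![J X, Y, J Z] - 𝒯 ![X, J Y, J Z] = 0 := by
  obtain ⟨u, w, hli⟩ := J.exists_linearIndependent_pairs_of_finrank_eq_four hdim hJ
  have hD : 𝒯.complexDefect J.toLinearMap = 0 :=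
    AlternatingMap.eq_zero_of_apply_map_self_eq_zero _
      (basisOfLinearIndependentOfCardEqFinrank hli (by simp [hdim]))
      (coe_basisOfLinearIndependentOfCardEqFinrank ..) (𝒯.complexDefect_apply_map_self hJ)
  simpa [hD] using (𝒯.complexDefect_apply X Y Z J.toLinearMap).symm
end

section
/- Let V be a 4-dimensional real inner product space, let T : V × V → V be a bilinear map such that the trilinear form (X,Y,Z) ↦ ⟨T(X,Y),Z⟩ is alternating (totally skew-symmetric), and let J : V → V be a linear isometry with J ∘ J = −id_V. Then for all X, Y ∈ V one has T(X,Y) − T(JX,JY) + J(T(JX,Y)) + J(T(X,JY)) = 0. -/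
open scoped RealInnerProductSpace

/-- **Lemma 4.1.** Let `V` be a 4-dimensional real inner product space,
`T` a bilinear map `V × V → V` such that `(X,Y,Z) ↦ ⟪T(X,Y),Z⟫` is alternating
(totally skew-symmetric), and `J` a linear isometry with `J ∘ J = -id`.  Then
`T(X,Y) − T(JX,JY) + J(T(JX,Y)) + J(T(X,JY)) = 0`. -/
theorem torsion_Nijenhuis_vanishing
    (V : Type*) [NormedAddCommGroup V] [InnerProductSpace ℝ V]
    (hdim : Module.finrank ℝ V = 4)
    (T : V →ₗ[ℝ] V →ₗ[ℝ] V)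
    (hskew₁ : ∀ X Y Z : V, ⟪T X Y, Z⟫ = -⟪T Y X, Z⟫)
    (hskew₂ : ∀ X Y Z : V, ⟪T X Y, Z⟫ = -⟪T X Z, Y⟫)
    (J : V →ₗᵢ[ℝ] V) (hJ : ∀ x : V, J (J x) = -x)
    (X Y : V) :
    T X Y - T (J X) (J Y) + J (T (J X) Y) + J (T X (J Y)) = 0 := by
  have h0 : ∀ v : V, (∀ z : V, ⟪v, z⟫ = 0) → v = 0 := by
    intro v hv
    exact inner_self_eq_zero.mp (hv v)
  have hJadj : ∀ w z : V, ⟪J w, z⟫ = -⟪w, J z⟫ := by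
    intro w z
    have h := J.inner_map_map w (J z)
    rw [hJ z, inner_neg_right] at h
    linarith
  have swap13 : ∀ a b c : V, ⟪T a b, c⟫ = -⟪T c b, a⟫ := by
    intro a b c
    linear_combination hskew₂ a b c - hskew₁ a c b + hskew₂ c a b
  -- the expression as a linear map in the second variable
  set L : V →ₗ[ℝ] V :=
    { toFun := fun y => T X y - T (J X) (J y) + J (T (J X) y) + J (T X (J y))
      map_add' := by
        intro y₁ y₂
        simp only [map_add]
        abel
      map_smul' := by
        intro c y
        simp only [map_smul, RingHom.id_apply, smul_sub, smul_add]
        } with hLdef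
  suffices hLY : L Y = 0 by simpa [hLdef] using hLY
  have hEXX : ∀ x : V, T x x - T (J x) (J x) + J (T (J x) x) + J (T x (J x)) = 0 := by
    intro x
    apply h0
    intro z
    simp only [inner_add_left, inner_sub_left, hJadj]
    linear_combination (1/2 : ℝ) * hskew₁ x x z - (1/2 : ℝ) * hskew₁ (J x) (J x) z
      - hskew₁ (J x) x (J z)
  have hEXJX : ∀ x : V,
      T x (J x) - T (J x) (J (J x)) + J (T (J x) (J x)) + J (T x (J (J x))) = 0 := by
    intro x
    apply h0
    intro z
    simp only [hJ, map_neg, inner_add_left, inner_sub_left, inner_neg_left, hJadj,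
      inner_neg_right, neg_neg]
    linear_combination hskew₁ x (J x) z - (1/2 : ℝ) * hskew₁ (J x) (J x) (J z)
      + (1/2 : ℝ) * hskew₁ x x (J z)
  by_cases hind : LinearIndependent ℝ ![X, J X, Y, J Y]
  · -- independent case: the four vectors span V
    have hspan : Submodule.span ℝ (Set.range ![X, J X, Y, J Y]) = ⊤ :=
      hind.span_eq_top_of_card_eq_finrank (by simp [hdim])
    apply h0
    intro z
    have hz : z ∈ Submodule.span ℝ (Set.range ![X, J X, Y, J Y]) := by
      rw [hspan]; trivial
    induction hz using Submodule.span_induction with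
    | mem w hw =>
      obtain ⟨i, rfl⟩ := hw
      have hLY : ∀ z : V, ⟪L Y, z⟫
          = ⟪T X Y, z⟫ - ⟪T (J X) (J Y), z⟫ - ⟪T (J X) Y, J z⟫ - ⟪T X (J Y), J z⟫ := by
        intro z
        simp only [hLdef, LinearMap.coe_mk, AddHom.coe_mk, inner_add_left, inner_sub_left, hJadj]
        ring
      fin_cases i
      · -- z = X
        show ⟪L Y, X⟫ = 0
        rw [hLY]
        linear_combination (1/2 : ℝ) * swap13 X Y X - (1/2 : ℝ) * swap13 (J X) Y (J X)
          - swap13 X (J Y) (J X)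
      · -- z = J X
        show ⟪L Y, J X⟫ = 0
        rw [hLY]
        simp only [hJ, inner_neg_right, neg_neg]
        linear_combination swap13 X Y (J X) - (1/2 : ℝ) * swap13 (J X) (J Y) (J X)
          + (1/2 : ℝ) * swap13 X (J Y) X
      · -- z = Y
        show ⟪L Y, Y⟫ = 0
        rw [hLY]
        linear_combination (1/2 : ℝ) * hskew₂ X Y Y - (1/2 : ℝ) * hskew₂ X (J Y) (J Y)
          - hskew₂ (J X) (J Y) Y
      · -- z = J Y
        show ⟪L Y, J Y⟫ = 0
        rw [hLY]
        simp only [hJ, inner_neg_right, neg_neg]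
        linear_combination hskew₂ X Y (J Y) - (1/2 : ℝ) * hskew₂ (J X) (J Y) (J Y)
          + (1/2 : ℝ) * hskew₂ (J X) Y Y
    | zero => simp
    | add x y hx hy ihx ihy => rw [inner_add_right, ihx, ihy, add_zero]
    | smul a x hx ih => rw [real_inner_smul_right, ih, mul_zero]
  · -- dependent case
    obtain ⟨g, hg, i, hgi⟩ := Fintype.not_linearIndependent_iff.mp hind
    rw [Fin.sum_univ_four] at hg
    simp only [Matrix.cons_val_zero, Matrix.cons_val_one, Matrix.head_cons,
      Matrix.cons_val_two, Matrix.tail_cons, Matrix.cons_val_three] at hg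
    set a := g 0; set b := g 1; set c := g 2; set d := g 3
    have hg2 : a • J X - b • X + c • J Y - d • Y = 0 := by
      have := congrArg J hg
      simpa [map_add, map_smul, hJ, sub_eq_add_neg, smul_neg, add_comm, add_left_comm,
        add_assoc] using this
    by_cases hcd : c = 0 ∧ d = 0
    · -- then a • X + b • J X = 0 with (a,b) ≠ 0, forcing X = 0
      obtain ⟨hc, hd⟩ := hcd
      have hab : a • X + b • J X = 0 := by
        rw [hc, hd] at hg; simpa using hg
      have hab2 : a • J X - b • X = 0 := by
        rw [hc, hd] at hg2; simpa using hg2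
      have hXzero : (a ^ 2 + b ^ 2) • X = 0 := by
        linear_combination (norm := module) a • hab - b • hab2
      have habne : a ^ 2 + b ^ 2 ≠ 0 := by
        fin_cases i
        · have ha : a ≠ 0 := hgi
          positivity
        · have hb : b ≠ 0 := hgi
          positivity
        · exact absurd hc hgi
        · exact absurd hd hgi
      have hX : X = 0 := by
        have := congrArg (fun v => (a ^ 2 + b ^ 2)⁻¹ • v) hXzero
        simpa [smul_smul, inv_mul_cancel₀ habne] using this
      have hLYeq : L Y = T X Y - T (J X) (J Y) + J (T (J X) Y) + J (T X (J Y)) := by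
        simp [hLdef]
      rw [hLYeq, hX]
      simp
    · -- then Y is a combination of X and J X
      have hr : c ^ 2 + d ^ 2 ≠ 0 := by
        rcases not_and_or.mp hcd with h | h
        · positivity
        · positivity
      have hYcomb : (c ^ 2 + d ^ 2) • Y = (-(a * c + b * d)) • X + (a * d - b * c) • J X := by
        linear_combination (norm := module) c • hg - d • hg2
      have hY : Y = ((c ^ 2 + d ^ 2)⁻¹ * (-(a * c + b * d))) • X
          + ((c ^ 2 + d ^ 2)⁻¹ * (a * d - b * c)) • J X := by
        have := congrArg (fun v => (c ^ 2 + d ^ 2)⁻¹ • v) hYcomb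
        simpa [smul_smul, inv_mul_cancel₀ hr, smul_add] using this
      rw [hY, map_add, map_smul, map_smul]
      have hLX : L X = 0 := by
        simpa [hLdef] using hEXX X
      have hLJX : L (J X) = 0 := by
        simpa [hLdef] using hEXJX X
      rw [hLX, hLJX, smul_zero, smul_zero, add_zero]
end

section
/- For every λ ∈ ℝ, the Lie algebras 𝔤_λ and 𝔤_{−λ} are isomorphic; explicitly, the linear map determined on bases by E₁ ↦ E₁', E₂ ↦ E₂', E₃ ↦ −E₃', E₄ ↦ −E₄' is a Lie algebra isomorphism from 𝔤_λ onto 𝔤_{−λ}. -/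
/-!
Conjugating `ad E₁` on `span {E₂, E₃}` by `diag (1, -1)` turns its matrix `[[1, λ], [-λ, 1]]`
into `[[1, -λ], [λ, 1]]`, while flipping the signs of both `E₃` and `E₄` leaves
`[E₂, E₃] = -E₄` and `[E₁, E₄] = 2E₄` unchanged. By bilinearity and antisymmetry it suffices to
compare brackets of basis vectors `E i, E j` with `i < j`.
-/

section BasisBrackets

variable {R ι L L' : Type*} [CommRing R] [LieRing L] [LieAlgebra R L] [LieRing L']
  [LieAlgebra R L']

theorem LinearMap.map_lie_of_basis (b : Module.Basis ι R L) (f : L →ₗ[R] L')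
    (h : ∀ i j, f ⁅b i, b j⁆ = ⁅f (b i), f (b j)⁆) (x y : L) : f ⁅x, y⁆ = ⁅f x, f y⁆ := by
  have key : (LieModule.toEnd R L L : L →ₗ[R] Module.End R L).compr₂ f =
      (LieModule.toEnd R L' L' : L' →ₗ[R] Module.End R L').compl₁₂ f f :=
    LinearMap.ext_basis b b h
  exact LinearMap.congr_fun₂ key x y

theorem LinearMap.map_lie_of_basis_of_lt [LinearOrder ι] (b : Module.Basis ι R L)
    (f : L →ₗ[R] L') (h : ∀ i j, i < j → f ⁅b i, b j⁆ = ⁅f (b i), f (b j)⁆) (x y : L) :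
    f ⁅x, y⁆ = ⁅f x, f y⁆ := by
  refine f.map_lie_of_basis b (fun i j ↦ ?_) x y
  rcases lt_trichotomy i j with hij | rfl | hji
  · exact h i j hij
  · simp only [lie_self, map_zero]
  · rw [← lie_skew, map_neg, h j i hji, lie_skew]

end BasisBrackets

/-- For every `λ ∈ ℝ`, the Lie algebras `𝔤_λ` and `𝔤_{−λ}` are
isomorphic; explicitly, the linear map determined on the bases by `E₁ ↦ E₁'`,
`E₂ ↦ E₂'`, `E₃ ↦ −E₃'`, `E₄ ↦ −E₄'` is a Lie algebra isomorphism. -/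
theorem g_lambda_iso_g_neg_lambda (lam : ℝ)
    (L : Type*) [LieRing L] [LieAlgebra ℝ L] (E : Module.Basis (Fin 4) ℝ L)
    (h12 : ⁅E 0, E 1⁆ = E 1 - lam • E 2)
    (h13 : ⁅E 0, E 2⁆ = lam • E 1 + E 2)
    (h14 : ⁅E 0, E 3⁆ = (2 : ℝ) • E 3)
    (h23 : ⁅E 1, E 2⁆ = -E 3)
    (h24 : ⁅E 1, E 3⁆ = 0)
    (h34 : ⁅E 2, E 3⁆ = 0)
    (L' : Type*) [LieRing L'] [LieAlgebra ℝ L'] (E' : Module.Basis (Fin 4) ℝ L')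
    (h12' : ⁅E' 0, E' 1⁆ = E' 1 - (-lam) • E' 2)
    (h13' : ⁅E' 0, E' 2⁆ = (-lam) • E' 1 + E' 2)
    (h14' : ⁅E' 0, E' 3⁆ = (2 : ℝ) • E' 3)
    (h23' : ⁅E' 1, E' 2⁆ = -E' 3)
    (h24' : ⁅E' 1, E' 3⁆ = 0)
    (h34' : ⁅E' 2, E' 3⁆ = 0) :
    ∃ f : L ≃ₗ⁅ℝ⁆ L',
      f (E 0) = E' 0 ∧ f (E 1) = E' 1 ∧ f (E 2) = -E' 2 ∧ f (E 3) = -E' 3 := by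
  let e : L ≃ₗ[ℝ] L' := E.equiv (E'.unitsSMul ![1, 1, -1, -1]) (Equiv.refl _)
  have he : ∀ i, e (E i) = (![1, 1, -1, -1] : Fin 4 → ℝˣ) i • E' i := fun i ↦ by
    simp only [e, Module.Basis.equiv_apply, Equiv.refl_apply, Module.Basis.unitsSMul_apply]
  have he0 : e (E 0) = E' 0 := by simpa using he 0
  have he1 : e (E 1) = E' 1 := by simpa using he 1
  have he2 : e (E 2) = -E' 2 := by simpa [Units.smul_def] using he 2
  have he3 : e (E 3) = -E' 3 := by simpa [Units.smul_def] using he 3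
  have hlie := e.toLinearMap.map_lie_of_basis_of_lt E fun i j hij ↦ by
    fin_cases i <;> fin_cases j <;> simp at hij <;>
      simp [h12, h13, h14, h23, h24, h34, h12', h13', h14', h23', h24', h34',
        he0, he1, he2, he3, add_comm]
  exact ⟨{ e with map_lie' := hlie _ _ }, he0, he1, he2, he3⟩
end

section
/- There is no inner product ⟨·,·⟩ on 𝔤_λ for which every adjoint operator ad_X is skew-symmetric, i.e. no real inner product on 𝔤_λ satisfying ⟨[X,Y],Z⟩ = −⟨Y,[X,Z]⟩ for all X, Y, Z ∈ 𝔤_λ. (Indeed, any such inner product would force ⟨E₄,E₄⟩ = 0 because [E₁,E₄] = 2E₄; this is the paper's argument that the group G_λ is not compact.) -/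
theorem LinearMap.BilinForm.lieInvariant.apply_self_eq_zero_of_lie_eq_smul
    {R L M : Type*} [CommRing R] [NoZeroDivisors R] [IsAddTorsionFree R] [LieRing L]
    [AddCommGroup M] [Module R M] [LieRingModule L M]
    {Φ : LinearMap.BilinForm R M} (hΦ : Φ.lieInvariant L)
    {x : L} {m : M} {c : R} (hc : c ≠ 0) (hm : ⁅x, m⁆ = c • m) :
    Φ m m = 0 := by
  have h := hΦ x m m
  rw [hm, map_smul, LinearMap.smul_apply, map_smul, smul_eq_mul] at h
  exact (mul_eq_zero.mp (self_eq_neg.mp h)).resolve_left hc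

theorem g_lambda_no_biinvariant_inner_product_general
    (L : Type*) [LieRing L] [LieAlgebra ℝ L]
    (E : Module.Basis (Fin 4) ℝ L)
    (h14 : ⁅E 0, E 3⁆ = (2 : ℝ) • E 3) :
    ¬ ∃ g : L →ₗ[ℝ] L →ₗ[ℝ] ℝ,
        (∀ X Y : L, g X Y = g Y X) ∧
        (∀ X : L, X ≠ 0 → 0 < g X X) ∧
        (∀ X Y Z : L, g ⁅X, Y⁆ Z = -g Y ⁅X, Z⁆) := by
  rintro ⟨g, -, hpos, hinv⟩
  have hE₃ : g (E 3) (E 3) = 0 :=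
    LinearMap.BilinForm.lieInvariant.apply_self_eq_zero_of_lie_eq_smul (Φ := g) hinv
      two_ne_zero h14
  exact (hpos (E 3) (E.ne_zero 3)).ne' hE₃

/-- There is no inner product on `𝔤_λ` (i.e. no symmetric positive
definite bilinear form) for which every adjoint operator `ad_X` is skew-symmetric:
indeed, any such inner product would force `⟨E₄,E₄⟩ = 0` because `[E₁,E₄] = 2E₄`. -/
theorem g_lambda_no_biinvariant_inner_product (lam : ℝ)
    (L : Type*) [LieRing L] [LieAlgebra ℝ L]
    (E : Module.Basis (Fin 4) ℝ L)
    (h12 : ⁅E 0, E 1⁆ = E 1 - lam • E 2)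
    (h13 : ⁅E 0, E 2⁆ = lam • E 1 + E 2)
    (h14 : ⁅E 0, E 3⁆ = (2 : ℝ) • E 3)
    (h23 : ⁅E 1, E 2⁆ = -E 3)
    (h24 : ⁅E 1, E 3⁆ = 0)
    (h34 : ⁅E 2, E 3⁆ = 0) :
    ¬ ∃ g : L →ₗ[ℝ] L →ₗ[ℝ] ℝ,
        (∀ X Y : L, g X Y = g Y X) ∧
        (∀ X : L, X ≠ 0 → 0 < g X X) ∧
        (∀ X Y Z : L, g ⁅X, Y⁆ Z = -g Y ⁅X, Z⁆) :=
  g_lambda_no_biinvariant_inner_product_general L E h14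
end
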